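/- arXiv:1802.07645 — 3 statements merged into one kernel-verified Lean document; each statement's English description precedes it below -/
import Mathlib

section
/- For every ρ̄ > 0, every ε > 0, and every u < ū, there exists a unique ρ > ρ̄ such that (u − ū)² = 2ε·((ρ − ρ̄)/(ρ + ρ̄))·(p(ρ) − p(ρ̄)). (Existence follows since the function F(ρ) = 2ε·((ρ − ρ̄)/(ρ + ρ̄))·(p(ρ) − p(ρ̄)) vanishes at ρ̄, tends to +∞ as ρ → ∞, and is strictly increasing on [ρ̄, ∞).) -/
open Real Filter Topology

noncomputable def p (ρ : ℝ) : ℝ := ∫ ξ in (0:ℝ)..ρ, ξ * Real.exp ξ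

/-! The right-hand side `F(ρ)` is `2ε` times the product of `(ρ - ρ̄)/(ρ + ρ̄)` and
`p(ρ) - p(ρ̄)`, two nonnegative functions strictly increasing on `[ρ̄, ∞)`; the second is
unbounded because `p(ρ) = (ρ - 1)e^ρ + 1 ≥ ρ` for `ρ ≥ 1`. So `F` is continuous, strictly
increasing and unbounded on `[ρ̄, ∞)` with `F(ρ̄) = 0`, and takes the positive value `(u - ū)²`
exactly once there. -/

open Set

lemma hasDerivAt_sub_one_mul_exp_add_one (x : ℝ) :
    HasDerivAt (fun t ↦ (t - 1) * exp t + 1) (x * exp x) x := by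
  refine ((((hasDerivAt_id x).sub_const 1).mul (hasDerivAt_exp x)).add_const 1).congr_deriv ?_
  simp only [id]
  ring

lemma p_eq_sub_one_mul_exp_add_one (x : ℝ) : p x = (x - 1) * exp x + 1 := by
  rw [p, intervalIntegral.integral_eq_sub_of_hasDerivAt
    (fun ξ _ ↦ hasDerivAt_sub_one_mul_exp_add_one ξ)
    ((continuous_id.mul continuous_exp).intervalIntegrable 0 x)]
  simp

lemma continuous_p : Continuous p := by
  rw [funext p_eq_sub_one_mul_exp_add_one]
  fun_prop

lemma strictMonoOn_p : StrictMonoOn p (Ici 0) := by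
  rw [funext p_eq_sub_one_mul_exp_add_one]
  refine strictMonoOn_of_deriv_pos (convex_Ici 0) (by fun_prop) fun x hx ↦ ?_
  rw [interior_Ici] at hx
  rw [(hasDerivAt_sub_one_mul_exp_add_one x).deriv]
  exact mul_pos hx (exp_pos x)

lemma p_le_p {x y : ℝ} (hx : 0 ≤ x) (hxy : x ≤ y) : p x ≤ p y :=
  strictMonoOn_p.monotoneOn hx (hx.trans hxy) hxy

lemma self_le_p {x : ℝ} (hx : 1 ≤ x) : x ≤ p x := by
  rw [p_eq_sub_one_mul_exp_add_one]
  nlinarith [one_le_exp (zero_le_one.trans hx)]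

lemma tendsto_p_atTop : Tendsto p atTop atTop :=
  tendsto_atTop_mono' atTop (eventually_ge_atTop 1 |>.mono fun _ ↦ self_le_p) tendsto_id

lemma strictMonoOn_sub_div_add {a : ℝ} (ha : 0 < a) :
    StrictMonoOn (fun x ↦ (x - a) / (x + a)) (Ioi (-a)) := by
  intro x hx y hy hxy
  rw [mem_Ioi] at hx hy
  rw [div_lt_div_iff₀ (by linarith) (by linarith)]
  nlinarith

noncomputable def hugoniotCurve (ε ρbar ρ : ℝ) : ℝ :=
  2 * ε * ((ρ - ρbar) / (ρ + ρbar)) * (p ρ - p ρbar)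

section hugoniotCurve

variable {ε ρbar : ℝ}

@[simp]
lemma hugoniotCurve_self : hugoniotCurve ε ρbar ρbar = 0 := by
  simp [hugoniotCurve]

lemma continuousOn_hugoniotCurve (hρ : 0 < ρbar) :
    ContinuousOn (hugoniotCurve ε ρbar) (Ici ρbar) := by
  refine ContinuousOn.mul ?_ (continuous_p.sub continuous_const).continuousOn
  refine continuousOn_const.mul (ContinuousOn.div (by fun_prop) (by fun_prop) fun x hx ↦ ?_)
  rw [mem_Ici] at hx
  exact (by linarith : 0 < x + ρbar).ne'

lemma strictMonoOn_hugoniotCurve (hρ : 0 < ρbar) (hε : 0 < ε) :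
    StrictMonoOn (hugoniotCurve ε ρbar) (Ici ρbar) := by
  intro x hx y hy hxy
  rw [mem_Ici] at hx hy
  have hq : (x - ρbar) / (x + ρbar) < (y - ρbar) / (y + ρbar) :=
    strictMonoOn_sub_div_add hρ (mem_Ioi.2 (by linarith)) (mem_Ioi.2 (by linarith)) hxy
  have hq₀ : 0 ≤ (x - ρbar) / (x + ρbar) := div_nonneg (by linarith) (by linarith)
  have hp : p x - p ρbar < p y - p ρbar :=
    sub_lt_sub_right (strictMonoOn_p (hρ.le.trans hx) (hρ.le.trans hy) hxy) _
  have hp₀ : 0 ≤ p x - p ρbar := sub_nonneg.2 (p_le_p hρ.le hx)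
  unfold hugoniotCurve
  rw [mul_assoc (2 * ε), mul_assoc (2 * ε)]
  exact mul_lt_mul_of_pos_left (mul_lt_mul'' hq hp hq₀ hp₀) (by positivity)

lemma tendsto_hugoniotCurve_atTop (hρ : 0 < ρbar) (hε : 0 < ε) :
    Tendsto (hugoniotCurve ε ρbar) atTop atTop := by
  have hlin : Tendsto (fun ρ ↦ 2 * ε / 3 * (p ρ - p ρbar)) atTop atTop :=
    (tendsto_atTop_add_const_right _ _ tendsto_p_atTop).const_mul_atTop (by positivity)
  refine tendsto_atTop_mono' atTop ((eventually_ge_atTop (2 * ρbar)).mono fun ρ hρ' ↦ ?_) hlin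
  have hq : 1 / 3 ≤ (ρ - ρbar) / (ρ + ρbar) := by
    rw [div_le_div_iff₀ (by norm_num) (by linarith)]
    linarith
  have hp₀ : 0 ≤ p ρ - p ρbar := sub_nonneg.2 (p_le_p hρ.le (by linarith))
  calc 2 * ε / 3 * (p ρ - p ρbar) = 2 * ε * (1 / 3) * (p ρ - p ρbar) := by ring
    _ ≤ hugoniotCurve ε ρbar ρ := by unfold hugoniotCurve; gcongr

end hugoniotCurve

/-- For every `ρ̄ > 0`, `ε > 0` and `u < ū` there exists a unique `ρ > ρ̄` with
`(u − ū)² = 2ε·((ρ − ρ̄)/(ρ + ρ̄))·(p(ρ) − p(ρ̄))`. -/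
theorem stmt1 (ρbar : ℝ) (hρ : 0 < ρbar) (ε : ℝ) (hε : 0 < ε) (u ubar : ℝ) (hu : u < ubar) :
    ∃! ρ : ℝ, ρbar < ρ ∧
      (u - ubar) ^ 2 = 2 * ε * ((ρ - ρbar) / (ρ + ρbar)) * (p ρ - p ρbar) := by
  have hc : 0 < (u - ubar) ^ 2 := sq_pos_of_neg (sub_neg.2 hu)
  obtain ⟨ρ, hρ_ge, hρ_eq⟩ := intermediate_value_Ici (continuousOn_hugoniotCurve hρ)
    (tendsto_hugoniotCurve_atTop hρ hε) (show (u - ubar) ^ 2 ∈ Ici _ by simpa using hc.le)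
  have hρ_gt : ρbar < ρ := hρ_ge.lt_of_ne <| by
    rintro rfl
    simp only [hugoniotCurve_self] at hρ_eq
    exact hc.ne hρ_eq
  refine ⟨ρ, ⟨hρ_gt, hρ_eq.symm⟩, fun σ ⟨hσ, hσ_eq⟩ ↦ ?_⟩
  exact (strictMonoOn_hugoniotCurve hρ hε).injOn hσ.le hρ_ge (hσ_eq.symm.trans hρ_eq.symm)
end

section
/- Let u_l > u_r and ρ_l, ρ_r > 0, and suppose that for each ε in some interval (0, η) the pair (u*_ε, ρ*_ε) satisfies u_r < u*_ε < u_l, ρ*_ε > max(ρ_l, ρ_r), together with the two equations (u*_ε − u_l)²·(ρ*_ε + ρ_l)/2 = ε·(ρ*_ε − ρ_l)·(p(ρ*_ε) − p(ρ_l)) and (u*_ε − u_r)²·(ρ*_ε + ρ_r)/2 = ε·(ρ*_ε − ρ_r)·(p(ρ*_ε) − p(ρ_r)). Define the shock speeds s₁(ε) = (u*_ε + u_l)/2 + ε·(p(ρ*_ε) − p(ρ_l))/(u*_ε − u_l) and s₂(ε) = (u*_ε + u_r)/2 + ε·(p(ρ*_ε) − p(ρ_r))/(u*_ε − u_r). Then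 s₁(ε) → (u_l + u_r)/2 and s₂(ε) → (u_l + u_r)/2 as ε → 0⁺. -/
/-!
Write `a = u_l - u*` and `b = u* - u_r`. Each Hugoniot relation gives `a², b² ≤ 2 ε p(ρ*)`, and
`a + b = u_l - u_r`, so `p(ρ*) ≥ (u_l - u_r)² / (8 ε) → ∞`, hence `ρ* → ∞`. Dividing the two
relations writes `(a / b)²` as a product of three ratios that tend to `1`, so `a / b → 1` and
`u* → (u_l + u_r) / 2`. Eliminating `ε` with the relations, the speeds become
`s₁ = u* + (u* - u_l) ρ_l / (ρ* - ρ_l)` and `s₂ = u* + (u* - u_r) ρ_r / (ρ* - ρ_r)`, which have the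
same limit as `u*`.
-/

open Real Filter Topology

lemma hasDerivAt_p (x : ℝ) : HasDerivAt p (x * exp x) x :=
  ((continuous_id.mul continuous_exp).integral_hasStrictDerivAt 0 x).hasDerivAt

lemma p_zero : p 0 = 0 := intervalIntegral.integral_same

lemma monotoneOn_p : MonotoneOn p (Set.Ici 0) := by
  refine monotoneOn_of_hasDerivWithinAt_nonneg (convex_Ici 0)
    (fun x _ => (hasDerivAt_p x).continuousAt.continuousWithinAt)
    (fun x _ => (hasDerivAt_p x).hasDerivWithinAt) fun x hx => ?_
  rw [interior_Ici] at hx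
  exact mul_nonneg hx.le (exp_pos x).le

lemma p_nonneg {ρ : ℝ} (hρ : 0 ≤ ρ) : 0 ≤ p ρ :=
  p_zero ▸ monotoneOn_p Set.self_mem_Ici hρ hρ

section Hugoniot

variable {u u₀ a b ρ ρ₀ ρl ρr ε P P₀ Pl Pr : ℝ}

lemma shock_speed_eq (hu : u ≠ u₀) (hρ : ρ ≠ ρ₀)
    (h : (u - u₀) ^ 2 * (ρ + ρ₀) / 2 = ε * (ρ - ρ₀) * (P - P₀)) :
    (u + u₀) / 2 + ε * (P - P₀) / (u - u₀) = u + (u - u₀) * ρ₀ / (ρ - ρ₀) := by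
  have hu' : u - u₀ ≠ 0 := sub_ne_zero.2 hu
  have hρ' : ρ - ρ₀ ≠ 0 := sub_ne_zero.2 hρ
  field_simp
  linear_combination (-2) * h

lemma sq_le_of_hugoniot (hρ₀ : 0 ≤ ρ₀) (hρ : ρ₀ < ρ) (hP₀ : 0 ≤ P₀) (hP : P₀ ≤ P) (hε : 0 ≤ ε)
    (h : a ^ 2 * (ρ + ρ₀) / 2 = ε * (ρ - ρ₀) * (P - P₀)) : a ^ 2 ≤ 2 * ε * P := by
  have hρ' : 0 < ρ + ρ₀ := by linarith
  refine le_of_mul_le_mul_right ?_ hρ'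
  nlinarith [mul_nonneg hε (mul_nonneg (sub_nonneg.2 hP) hρ₀),
    mul_nonneg hε (mul_nonneg hP₀ (sub_nonneg.2 hρ.le))]

lemma hugoniot_sq_div_sq (hb : b ≠ 0) (hρl : ρ + ρl ≠ 0) (hρr : ρ - ρr ≠ 0) (hPr : P - Pr ≠ 0)
    (hl : a ^ 2 * (ρ + ρl) / 2 = ε * (ρ - ρl) * (P - Pl))
    (hr : b ^ 2 * (ρ + ρr) / 2 = ε * (ρ - ρr) * (P - Pr)) :
    (a / b) ^ 2 = (ρ - ρl) / (ρ + ρl) * ((ρ + ρr) / (ρ - ρr)) * ((P - Pl) / (P - Pr)) := by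
  rw [div_pow, div_mul_div_comm, div_mul_div_comm, div_eq_div_iff (by positivity) (by simp [*])]
  linear_combination (2 * (ρ - ρr) * (P - Pr)) * hl - (2 * (ρ - ρl) * (P - Pl)) * hr

end Hugoniot

section Limits

variable {α : Type*} {l : Filter α}

lemma Filter.Tendsto.atTop_of_monotoneOn_Ici {f : α → ℝ} {g : ℝ → ℝ}
    (hg : MonotoneOn g (Set.Ici 0)) (hf : ∀ᶠ x in l, 0 ≤ f x)
    (h : Tendsto (fun x => g (f x)) l atTop) : Tendsto f l atTop := by
  refine tendsto_atTop.2 fun M => ?_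
  filter_upwards [hf, h.eventually_gt_atTop (g (max M 0))] with x hx hgx
  by_contra! hxM
  exact (hgx.trans_le (hg hx (le_max_right M 0) (hxM.le.trans (le_max_left M 0)))).false

lemma tendsto_add_div_add_atTop {f : α → ℝ} (hf : Tendsto f l atTop) (c d : ℝ) :
    Tendsto (fun x => (f x + c) / (f x + d)) l (𝓝 1) := by
  have h : Tendsto (fun x => 1 + (c - d) / (f x + d)) l (𝓝 (1 + 0)) :=
    tendsto_const_nhds.add (tendsto_const_nhds.div_atTop (tendsto_atTop_add_const_right _ d hf))
  rw [add_zero] at h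
  refine h.congr' ?_
  filter_upwards [hf.eventually_gt_atTop (-d)] with x hx
  have : f x + d ≠ 0 := by linarith
  field_simp
  ring

lemma tendsto_shock_speed {u ρ : α → ℝ} {m u₀ ρ₀ : ℝ} (hu : Tendsto u l (𝓝 m))
    (hρ : Tendsto ρ l atTop) :
    Tendsto (fun x => u x + (u x - u₀) * ρ₀ / (ρ x - ρ₀)) l (𝓝 m) := by
  have hρ' : Tendsto (fun x => ρ x - ρ₀) l atTop := by
    simpa only [sub_eq_add_neg] using tendsto_atTop_add_const_right _ (-ρ₀) hρ
  simpa using hu.add (((hu.sub_const u₀).mul_const ρ₀).div_atTop hρ')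

lemma tendsto_midpoint_of_sq_ratio {u : α → ℝ} {ul ur : ℝ}
    (hu : ∀ᶠ x in l, ur < u x ∧ u x < ul)
    (h : Tendsto (fun x => ((ul - u x) / (u x - ur)) ^ 2) l (𝓝 1)) :
    Tendsto u l (𝓝 ((ul + ur) / 2)) := by
  have hratio : Tendsto (fun x => (ul - u x) / (u x - ur)) l (𝓝 1) := by
    have hsqrt := h.sqrt
    rw [sqrt_one] at hsqrt
    refine hsqrt.congr' ?_
    filter_upwards [hu] with x ⟨hur, hul⟩
    exact sqrt_sq (div_nonneg (by linarith) (by linarith))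
  have hlim : Tendsto (fun x => ur + (ul - ur) / (1 + (ul - u x) / (u x - ur))) l
      (𝓝 (ur + (ul - ur) / (1 + 1))) :=
    tendsto_const_nhds.add (tendsto_const_nhds.div (tendsto_const_nhds.add hratio) (by norm_num))
  rw [show ur + (ul - ur) / (1 + 1) = (ul + ur) / 2 by ring] at hlim
  refine hlim.congr' ?_
  filter_upwards [hu] with x ⟨hur, hul⟩
  have hur' : u x - ur ≠ 0 := by linarith
  have hul' : ul - ur ≠ 0 := by linarith
  rw [one_add_div hur', show u x - ur + (ul - u x) = ul - ur by ring, div_div_cancel₀ hul',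
    add_sub_cancel]

end Limits

section RiemannProblem

variable {ul ur ρl ρr : ℝ} {us ρs : ℝ → ℝ}

lemma tendsto_p_atTop_of_hugoniot (hu : ur < ul) (hρl : 0 ≤ ρl) (hρr : 0 ≤ ρr)
    (hρ : ∀ᶠ ε in 𝓝[>] 0, max ρl ρr < ρs ε)
    (hl : ∀ᶠ ε in 𝓝[>] 0,
      (us ε - ul) ^ 2 * (ρs ε + ρl) / 2 = ε * (ρs ε - ρl) * (p (ρs ε) - p ρl))
    (hr : ∀ᶠ ε in 𝓝[>] 0,
      (us ε - ur) ^ 2 * (ρs ε + ρr) / 2 = ε * (ρs ε - ρr) * (p (ρs ε) - p ρr)) :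
    Tendsto (fun ε => p (ρs ε)) (𝓝[>] 0) atTop := by
  have hbound : ∀ᶠ ε in 𝓝[>] 0, (ul - ur) ^ 2 / 8 * ε⁻¹ ≤ p (ρs ε) := by
    filter_upwards [self_mem_nhdsWithin, hρ, hl, hr] with ε (hε : 0 < ε) hρε hlε hrε
    rw [max_lt_iff] at hρε
    have hsl := sq_le_of_hugoniot hρl hρε.1 (p_nonneg hρl)
      (monotoneOn_p hρl (hρl.trans hρε.1.le) hρε.1.le) hε.le hlε
    have hsr := sq_le_of_hugoniot hρr hρε.2 (p_nonneg hρr)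
      (monotoneOn_p hρr (hρr.trans hρε.2.le) hρε.2.le) hε.le hrε
    rw [← div_eq_mul_inv, div_div, div_le_iff₀ (by positivity)]
    nlinarith [sq_nonneg (us ε - ul + (us ε - ur))]
  have hc : 0 < (ul - ur) ^ 2 / 8 := by have := sub_pos.2 hu; positivity
  exact tendsto_atTop_mono' _ hbound (tendsto_inv_nhdsGT_zero.const_mul_atTop hc)

lemma tendsto_midpoint_of_hugoniot (hu : ∀ᶠ ε in 𝓝[>] 0, ur < us ε ∧ us ε < ul)
    (hρ : Tendsto ρs (𝓝[>] 0) atTop) (hP : Tendsto (fun ε => p (ρs ε)) (𝓝[>] 0) atTop)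
    (hl : ∀ᶠ ε in 𝓝[>] 0,
      (us ε - ul) ^ 2 * (ρs ε + ρl) / 2 = ε * (ρs ε - ρl) * (p (ρs ε) - p ρl))
    (hr : ∀ᶠ ε in 𝓝[>] 0,
      (us ε - ur) ^ 2 * (ρs ε + ρr) / 2 = ε * (ρs ε - ρr) * (p (ρs ε) - p ρr)) :
    Tendsto us (𝓝[>] 0) (𝓝 ((ul + ur) / 2)) := by
  refine tendsto_midpoint_of_sq_ratio hu ?_
  have hfactors : Tendsto (fun ε => (ρs ε - ρl) / (ρs ε + ρl) * ((ρs ε + ρr) / (ρs ε - ρr)) *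
      ((p (ρs ε) - p ρl) / (p (ρs ε) - p ρr))) (𝓝[>] 0) (𝓝 1) := by
    simpa only [sub_eq_add_neg, mul_one] using
      ((tendsto_add_div_add_atTop hρ (-ρl) ρl).mul (tendsto_add_div_add_atTop hρ ρr (-ρr))).mul
        (tendsto_add_div_add_atTop hP (-p ρl) (-p ρr))
  refine hfactors.congr' ?_
  filter_upwards [hu, hl, hr, hρ.eventually_gt_atTop (max ρr (-ρl)),
    hP.eventually_gt_atTop (p ρr)] with ε ⟨hur, _⟩ hlε hrε hρε hPε
  rw [max_lt_iff] at hρε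
  refine (hugoniot_sq_div_sq (a := ul - us ε) (sub_ne_zero.2 hur.ne') ?_ ?_ ?_
    (by linear_combination hlε) hrε).symm <;> linarith

end RiemannProblem

/-- Both shock speeds `s₁(ε), s₂(ε)` of the two-shock Riemann solution tend to
`(u_l + u_r)/2` as `ε → 0⁺`. -/
theorem stmt8 (ul ur ρl ρr η : ℝ) (hu : ur < ul) (hρl : 0 < ρl) (hρr : 0 < ρr)
    (hη : 0 < η) (us ρs : ℝ → ℝ)
    (hmem : ∀ ε ∈ Set.Ioo (0:ℝ) η, ur < us ε ∧ us ε < ul ∧ max ρl ρr < ρs ε)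
    (heq1 : ∀ ε ∈ Set.Ioo (0:ℝ) η,
      (us ε - ul) ^ 2 * (ρs ε + ρl) / 2 = ε * (ρs ε - ρl) * (p (ρs ε) - p ρl))
    (heq2 : ∀ ε ∈ Set.Ioo (0:ℝ) η,
      (us ε - ur) ^ 2 * (ρs ε + ρr) / 2 = ε * (ρs ε - ρr) * (p (ρs ε) - p ρr)) :
    Tendsto (fun ε => (us ε + ul) / 2 + ε * (p (ρs ε) - p ρl) / (us ε - ul))
      (𝓝[>] (0:ℝ)) (𝓝 ((ul + ur) / 2)) ∧
    Tendsto (fun ε => (us ε + ur) / 2 + ε * (p (ρs ε) - p ρr) / (us ε - ur))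
      (𝓝[>] (0:ℝ)) (𝓝 ((ul + ur) / 2)) := by
  have hIoo : Set.Ioo 0 η ∈ 𝓝[>] (0:ℝ) := Ioo_mem_nhdsGT hη
  have hmem' := eventually_of_mem hIoo hmem
  have hl := eventually_of_mem hIoo heq1
  have hr := eventually_of_mem hIoo heq2
  have hρmax : ∀ᶠ ε in 𝓝[>] 0, max ρl ρr < ρs ε := hmem'.mono fun _ h => h.2.2
  have hP := tendsto_p_atTop_of_hugoniot hu hρl.le hρr.le hρmax hl hr
  have hρ : Tendsto ρs (𝓝[>] 0) atTop := hP.atTop_of_monotoneOn_Ici monotoneOn_p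
    (hρmax.mono fun _ h => hρl.le.trans ((le_max_left _ _).trans h.le))
  have hus := tendsto_midpoint_of_hugoniot (hmem'.mono fun _ h => ⟨h.1, h.2.1⟩) hρ hP hl hr
  constructor
  · refine (tendsto_shock_speed (u₀ := ul) (ρ₀ := ρl) hus hρ).congr' ?_
    filter_upwards [hmem', hl] with ε ⟨_, hul, hρε⟩ hlε
    exact (shock_speed_eq hul.ne (by linarith [le_max_left ρl ρr]) hlε).symm
  · refine (tendsto_shock_speed (u₀ := ur) (ρ₀ := ρr) hus hρ).congr' ?_
    filter_upwards [hmem', hr] with ε ⟨hur, _, hρε⟩ hrε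
    exact (shock_speed_eq hur.ne' (by linarith [le_max_right ρl ρr]) hrε).symm
end

section
/- (Delta-shock limit of the density.) Let u_l > u_r, ρ_l, ρ_r > 0, and for ε ∈ (0, η) let (u*_ε, ρ*_ε) be as in the two-shock Riemann solution: u_r < u*_ε < u_l, ρ*_ε > max(ρ_l, ρ_r), (u*_ε − u_l)²·(ρ*_ε + ρ_l)/2 = ε·(ρ*_ε − ρ_l)·(p(ρ*_ε) − p(ρ_l)) and (u*_ε − u_r)²·(ρ*_ε + ρ_r)/2 = ε·(ρ*_ε − ρ_r)·(p(ρ*_ε) − p(ρ_r)); set s₁(ε) = (u*_ε + u_l)/2 + ε·(p(ρ*_ε) − p(ρ_l))/(u*_ε − u_l), s₂(ε) = (u*_ε + u_r)/2 + ε·(p(ρ*_ε) − p(ρ_r))/(u*_ε − u_r), and define ρ^ε(x,t) = ρ_l if x < s₁(ε)t, ρ^ε(x,t) = ρ*_ε if s₁(ε)t < x < s₂(ε)t, and ρ^ε(x,t) = ρ_r if x > s₂(ε)t. Then for every smooth compactly supported test function φ on ℝ × (0,∞), with c = (u_l + u_r)/2, one has lim_{ε→0} ∫₀^∞ ∫_ℝ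 ρ^ε(x,t)·φ(x,t) dx dt = ∫₀^∞ ∫_{−∞}^{ct} ρ_l·φ(x,t) dx dt + ∫₀^∞ ∫_{ct}^{∞} ρ_r·φ(x,t) dx dt + ∫₀^∞ ((u_l − u_r)(ρ_l + ρ_r)/2)·t·φ(ct, t) dt. -/
open Real Filter Topology

set_option maxHeartbeats 2000000

open MeasureTheory Set intervalIntegral

lemma p_lt_p {a b : ℝ} (ha : 0 ≤ a) (hab : a < b) : p a < p b := by
  have hcont : Continuous fun ξ : ℝ => ξ * Real.exp ξ := by continuity
  have h1 : p b - p a = ∫ ξ in a..b, ξ * Real.exp ξ := by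
    rw [p, p, ← intervalIntegral.integral_add_adjacent_intervals
      (a := 0) (b := a) (c := b) (hcont.intervalIntegrable _ _) (hcont.intervalIntegrable _ _)]
    ring
  have h2 : 0 < ∫ ξ in a..b, ξ * Real.exp ξ := by
    apply intervalIntegral.intervalIntegral_pos_of_pos_on (hcont.intervalIntegrable _ _)
    · intro x hx
      exact mul_pos (lt_of_le_of_lt ha hx.1) (Real.exp_pos x)
    · exact hab
  linarith

lemma p_pos {a : ℝ} (ha : 0 < a) : 0 < p a := by
  have := p_lt_p le_rfl ha
  simpa [p] using this

lemma rhos_atTop (ul ur ρl ρr η : ℝ) (hu : ur < ul) (hρl : 0 < ρl) (hρr : 0 < ρr)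
    (hη : 0 < η) (us ρs : ℝ → ℝ)
    (hmem : ∀ ε ∈ Set.Ioo (0:ℝ) η, ur < us ε ∧ us ε < ul ∧ max ρl ρr < ρs ε)
    (heq1 : ∀ ε ∈ Set.Ioo (0:ℝ) η,
      (us ε - ul) ^ 2 * (ρs ε + ρl) / 2 = ε * (ρs ε - ρl) * (p (ρs ε) - p ρl))
    (heq2 : ∀ ε ∈ Set.Ioo (0:ℝ) η,
      (us ε - ur) ^ 2 * (ρs ε + ρr) / 2 = ε * (ρs ε - ρr) * (p (ρs ε) - p ρr)) :
    Tendsto ρs (𝓝[>] (0:ℝ)) atTop := by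
  set d := (ul - ur) / 2 with hd
  have hdpos : 0 < d := by simp [hd]; linarith
  have key : ∀ ε ∈ Set.Ioo (0:ℝ) η, d ^ 2 / 2 ≤ ε * p (ρs ε) := by
    intro ε hε
    obtain ⟨h1, h2, h3⟩ := hmem ε hε
    have hρs : max ρl ρr < ρs ε := h3
    have hρsl : ρl < ρs ε := (le_max_left _ _).trans_lt hρs
    have hρsr : ρr < ρs ε := (le_max_right _ _).trans_lt hρs
    have hρspos : 0 < ρs ε := hρl.trans hρsl
    have hppos_l : 0 < p ρl := p_pos hρl
    have hppos_r : 0 < p ρr := p_pos hρr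
    have hpl : p ρl < p (ρs ε) := p_lt_p hρl.le hρsl
    have hpr : p ρr < p (ρs ε) := p_lt_p hρr.le hρsr
    rcases le_or_gt d (ul - us ε) with hc | hc
    · have e1 := heq1 ε hε
      have hsq : d ^ 2 ≤ (us ε - ul) ^ 2 := by nlinarith
      have hL : d ^ 2 * ρs ε / 2 ≤ (us ε - ul) ^ 2 * (ρs ε + ρl) / 2 := by
        nlinarith [mul_le_mul_of_nonneg_right hsq hρspos.le, sq_nonneg (us ε - ul)]
      have hA : (ρs ε - ρl) * (p (ρs ε) - p ρl) ≤ ρs ε * p (ρs ε) :=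
        mul_le_mul (by linarith) (by linarith) (by linarith) (by linarith)
      have hR : ε * (ρs ε - ρl) * (p (ρs ε) - p ρl) ≤ ε * ρs ε * p (ρs ε) := by
        nlinarith [mul_le_mul_of_nonneg_left hA hε.1.le]
      have hfin : d ^ 2 * ρs ε / 2 ≤ ε * ρs ε * p (ρs ε) := by linarith
      nlinarith
    · have hc' : d ≤ us ε - ur := by simp only [hd] at hc ⊢; linarith
      have e2 := heq2 ε hε
      have hsq : d ^ 2 ≤ (us ε - ur) ^ 2 := by nlinarith
      have hL : d ^ 2 * ρs ε / 2 ≤ (us ε - ur) ^ 2 * (ρs ε + ρr) / 2 := by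
        nlinarith [mul_le_mul_of_nonneg_right hsq hρspos.le, sq_nonneg (us ε - ur)]
      have hA : (ρs ε - ρr) * (p (ρs ε) - p ρr) ≤ ρs ε * p (ρs ε) :=
        mul_le_mul (by linarith) (by linarith) (by linarith) (by linarith)
      have hR : ε * (ρs ε - ρr) * (p (ρs ε) - p ρr) ≤ ε * ρs ε * p (ρs ε) := by
        nlinarith [mul_le_mul_of_nonneg_left hA hε.1.le]
      have hfin : d ^ 2 * ρs ε / 2 ≤ ε * ρs ε * p (ρs ε) := by linarith
      nlinarith
  rw [tendsto_atTop]
  intro b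
  set b' : ℝ := max b (max ρl ρr) + 1 with hb'
  have hb'pos : 0 < b' := by positivity
  have hpb' : 0 < p b' := p_pos hb'pos
  set δ : ℝ := min η ((d ^ 2 / 2) / p b') with hδdef
  have hδpos : 0 < δ := lt_min hη (div_pos (by positivity) hpb')
  filter_upwards [Ioo_mem_nhdsGT_of_mem (by exact ⟨le_rfl, hδpos⟩ : (0:ℝ) ∈ Set.Ico 0 δ)]
    with ε hε
  have hεη : ε ∈ Set.Ioo (0:ℝ) η := ⟨hε.1, hε.2.trans_le (min_le_left _ _)⟩
  have hk := key ε hεη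
  have h2 : ε * p b' < d ^ 2 / 2 := by
    have : ε < (d ^ 2 / 2) / p b' := hε.2.trans_le (min_le_right _ _)
    calc ε * p b' < ((d ^ 2 / 2) / p b') * p b' := by
          exact mul_lt_mul_of_pos_right this hpb'
      _ = d ^ 2 / 2 := div_mul_cancel₀ _ (ne_of_gt hpb')
  have hlt : p b' < p (ρs ε) := by
    have := h2.trans_le hk
    exact lt_of_mul_lt_mul_left this hε.1.le
  have : b' < ρs ε := by
    by_contra hcon
    push_neg at hcon
    rcases eq_or_lt_of_le hcon with h | h
    · rw [h] at hlt; exact lt_irrefl _ hlt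
    · exact absurd (p_lt_p (hρl.trans ((le_max_left _ _).trans_lt (hmem ε hεη).2.2)).le h)
        (not_lt.mpr hlt.le)
  have hbb' : b ≤ b' := (le_max_left b (max ρl ρr)).trans (by rw [hb']; linarith)
  linarith

lemma limits_aux (ul ur ρl ρr η : ℝ) (hu : ur < ul) (hρl : 0 < ρl) (hρr : 0 < ρr)
    (hη : 0 < η) (us ρs s1 s2 : ℝ → ℝ)
    (hmem : ∀ ε ∈ Set.Ioo (0:ℝ) η, ur < us ε ∧ us ε < ul ∧ max ρl ρr < ρs ε)
    (heq1 : ∀ ε ∈ Set.Ioo (0:ℝ) η,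
      (us ε - ul) ^ 2 * (ρs ε + ρl) / 2 = ε * (ρs ε - ρl) * (p (ρs ε) - p ρl))
    (heq2 : ∀ ε ∈ Set.Ioo (0:ℝ) η,
      (us ε - ur) ^ 2 * (ρs ε + ρr) / 2 = ε * (ρs ε - ρr) * (p (ρs ε) - p ρr))
    (hs1 : ∀ ε, s1 ε = (us ε + ul) / 2 + ε * (p (ρs ε) - p ρl) / (us ε - ul))
    (hs2 : ∀ ε, s2 ε = (us ε + ur) / 2 + ε * (p (ρs ε) - p ρr) / (us ε - ur))
    (htop : Tendsto ρs (𝓝[>] (0:ℝ)) atTop) :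
    Tendsto us (𝓝[>] (0:ℝ)) (𝓝 ((ul + ur)/2)) ∧
    Tendsto s1 (𝓝[>] (0:ℝ)) (𝓝 ((ul + ur)/2)) ∧
    Tendsto s2 (𝓝[>] (0:ℝ)) (𝓝 ((ul + ur)/2)) ∧
    Tendsto (fun ε => ρs ε * (s2 ε - s1 ε)) (𝓝[>] (0:ℝ))
      (𝓝 ((ul - ur) * (ρl + ρr) / 2)) := by
  set l := 𝓝[>] (0:ℝ)
  set c := (ul + ur) / 2 with hc
  have hulur : (0:ℝ) < ul - ur := by linarith
  have hev : ∀ᶠ ε in l, ε ∈ Set.Ioo (0:ℝ) η :=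
    Ioo_mem_nhdsGT_of_mem (by exact ⟨le_rfl, hη⟩)
  -- basic facts for ε in Ioo 0 η
  have hfacts : ∀ ε ∈ Set.Ioo (0:ℝ) η, us ε - ul ≠ 0 ∧ us ε - ur ≠ 0 ∧
      ρs ε - ρl ≠ 0 ∧ ρs ε - ρr ≠ 0 := by
    intro ε hε
    obtain ⟨h1, h2, h3⟩ := hmem ε hε
    have hl : ρl < ρs ε := (le_max_left _ _).trans_lt h3
    have hr : ρr < ρs ε := (le_max_right _ _).trans_lt h3
    exact ⟨sub_ne_zero.mpr h2.ne, sub_ne_zero.mpr h1.ne', sub_ne_zero.mpr hl.ne',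
      sub_ne_zero.mpr hr.ne'⟩
  have hA : ∀ ε ∈ Set.Ioo (0:ℝ) η,
      ε * (p (ρs ε) - p ρl) / (us ε - ul) =
        (us ε - ul) * (1/2 + ρl * (ρs ε - ρl)⁻¹) := by
    intro ε hε
    obtain ⟨h1, h2, h3, h4⟩ := hfacts ε hε
    have h := heq1 ε hε
    rw [div_eq_iff h1]
    field_simp
    linear_combination (-2) * h
  have hB : ∀ ε ∈ Set.Ioo (0:ℝ) η,
      ε * (p (ρs ε) - p ρr) / (us ε - ur) =
        (us ε - ur) * (1/2 + ρr * (ρs ε - ρr)⁻¹) := by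
    intro ε hε
    obtain ⟨h1, h2, h3, h4⟩ := hfacts ε hε
    have h := heq2 ε hε
    rw [div_eq_iff h2]
    field_simp
    linear_combination (-2) * h
  -- inverse limits
  have hinvl : Tendsto (fun ε => (ρs ε - ρl)⁻¹) l (𝓝 0) :=
    (htop.atTop_add tendsto_const_nhds).inv_tendsto_atTop
  have hinvr : Tendsto (fun ε => (ρs ε - ρr)⁻¹) l (𝓝 0) :=
    (htop.atTop_add tendsto_const_nhds).inv_tendsto_atTop
  have hid : Tendsto (fun ε : ℝ => ε) l (𝓝 0) := tendsto_id.mono_left nhdsWithin_le_nhds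
  -- us tendsto c
  have husc : Tendsto us l (𝓝 c) := by
    have hbound : ∀ᶠ ε in l, |us ε - c| ≤
        ((ul-ur)^2*ρl*(ρs ε - ρl)⁻¹ + (ul-ur)^2*ρr*(ρs ε - ρr)⁻¹ + ε*|p ρr - p ρl|)
          / (ul - ur) := by
      filter_upwards [hev] with ε hε
      obtain ⟨h1, h2, h3, h4⟩ := hfacts ε hε
      obtain ⟨hm1, hm2, hm3⟩ := hmem ε hε
      have hlρ : ρl < ρs ε := (le_max_left _ _).trans_lt hm3
      have hrρ : ρr < ρs ε := (le_max_right _ _).trans_lt hm3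
      have hid0 : (us ε - c) * ((ul - ur) * ((ρs ε - ρl) * (ρs ε - ρr))) =
          (us ε - ul)^2 * ρl * (ρs ε - ρr) - (us ε - ur)^2 * ρr * (ρs ε - ρl)
            - ε * (p ρr - p ρl) * ((ρs ε - ρl) * (ρs ε - ρr)) := by
        linear_combination (ρs ε - ρl) * (heq2 ε hε) - (ρs ε - ρr) * (heq1 ε hε)
      have hiddiv : us ε - c =
          ((us ε - ul)^2 * ρl * (ρs ε - ρl)⁻¹ - (us ε - ur)^2 * ρr * (ρs ε - ρr)⁻¹
            - ε * (p ρr - p ρl)) / (ul - ur) := by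
        rw [eq_div_iff hulur.ne']
        field_simp
        linear_combination hid0
      rw [hiddiv, abs_div, abs_of_pos hulur]
      gcongr
      have htri : |(us ε - ul)^2 * ρl * (ρs ε - ρl)⁻¹ - (us ε - ur)^2 * ρr * (ρs ε - ρr)⁻¹
          - ε * (p ρr - p ρl)| ≤ |(us ε - ul)^2 * ρl * (ρs ε - ρl)⁻¹|
            + |(us ε - ur)^2 * ρr * (ρs ε - ρr)⁻¹| + |ε * (p ρr - p ρl)| := by
        calc _ ≤ |(us ε - ul)^2 * ρl * (ρs ε - ρl)⁻¹ - (us ε - ur)^2 * ρr * (ρs ε - ρr)⁻¹|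
              + |ε * (p ρr - p ρl)| := abs_sub _ _
          _ ≤ _ := by gcongr; exact abs_sub _ _
      refine htri.trans ?_
      have hsq1 : (us ε - ul)^2 ≤ (ul - ur)^2 := by nlinarith
      have hsq2 : (us ε - ur)^2 ≤ (ul - ur)^2 := by nlinarith
      have hp1 : (0:ℝ) < (ρs ε - ρl)⁻¹ := inv_pos.mpr (by linarith)
      have hp2 : (0:ℝ) < (ρs ε - ρr)⁻¹ := inv_pos.mpr (by linarith)
      have e1 : |(us ε - ul)^2 * ρl * (ρs ε - ρl)⁻¹| ≤ (ul-ur)^2*ρl*(ρs ε - ρl)⁻¹ := by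
        rw [abs_of_nonneg (by positivity)]
        gcongr
      have e2 : |(us ε - ur)^2 * ρr * (ρs ε - ρr)⁻¹| ≤ (ul-ur)^2*ρr*(ρs ε - ρr)⁻¹ := by
        rw [abs_of_nonneg (by positivity)]
        gcongr
      have e3 : |ε * (p ρr - p ρl)| = ε * |p ρr - p ρl| := by
        rw [abs_mul, abs_of_pos hε.1]
      linarith
    have hg : Tendsto (fun ε => ((ul-ur)^2*ρl*(ρs ε - ρl)⁻¹ + (ul-ur)^2*ρr*(ρs ε - ρr)⁻¹
        + ε*|p ρr - p ρl|) / (ul - ur)) l (𝓝 0) := by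
      have : Tendsto (fun ε => (ul-ur)^2*ρl*(ρs ε - ρl)⁻¹ + (ul-ur)^2*ρr*(ρs ε - ρr)⁻¹
          + ε*|p ρr - p ρl|) l (𝓝 0) := by
        have := ((hinvl.const_mul ((ul-ur)^2*ρl)).add (hinvr.const_mul ((ul-ur)^2*ρr))).add
          (hid.mul_const (|p ρr - p ρl|))
        simpa using this
      simpa using this.div_const (ul - ur)
    have h0 : Tendsto (fun ε => us ε - c) l (𝓝 0) := squeeze_zero_norm' hbound hg
    have := h0.add_const c
    simpa using this
  -- s1
  have hs1c : Tendsto s1 l (𝓝 c) := by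
    have hcongr : ∀ᶠ ε in l, (us ε + ul) / 2 + (us ε - ul) * (1/2 + ρl * (ρs ε - ρl)⁻¹)
        = s1 ε := by
      filter_upwards [hev] with ε hε
      rw [hs1 ε, hA ε hε]
    refine Tendsto.congr' hcongr ?_
    have : Tendsto (fun ε => (us ε + ul) / 2 + (us ε - ul) * (1/2 + ρl * (ρs ε - ρl)⁻¹)) l
        (𝓝 ((c + ul)/2 + (c - ul) * (1/2 + ρl * 0))) := by
      exact ((husc.add_const ul).div_const 2).add ((husc.sub_const ul).mul
        (tendsto_const_nhds.add (hinvl.const_mul ρl)))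
    convert this using 2
    rw [hc]; ring
  -- s2
  have hs2c : Tendsto s2 l (𝓝 c) := by
    have hcongr : ∀ᶠ ε in l, (us ε + ur) / 2 + (us ε - ur) * (1/2 + ρr * (ρs ε - ρr)⁻¹)
        = s2 ε := by
      filter_upwards [hev] with ε hε
      rw [hs2 ε, hB ε hε]
    refine Tendsto.congr' hcongr ?_
    have : Tendsto (fun ε => (us ε + ur) / 2 + (us ε - ur) * (1/2 + ρr * (ρs ε - ρr)⁻¹)) l
        (𝓝 ((c + ur)/2 + (c - ur) * (1/2 + ρr * 0))) := by
      exact ((husc.add_const ur).div_const 2).add ((husc.sub_const ur).mul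
        (tendsto_const_nhds.add (hinvr.const_mul ρr)))
    convert this using 2
    rw [hc]; ring
  -- mass
  refine ⟨husc, hs1c, hs2c, ?_⟩
  have hcongr : ∀ᶠ ε in l,
      ρr * (us ε - ur) * (1 + ρr * (ρs ε - ρr)⁻¹) - ρl * (us ε - ul) * (1 + ρl * (ρs ε - ρl)⁻¹)
        = ρs ε * (s2 ε - s1 ε) := by
    filter_upwards [hev] with ε hε
    obtain ⟨h1, h2, h3, h4⟩ := hfacts ε hε
    rw [hs2 ε, hs1 ε, hB ε hε, hA ε hε]
    field_simp
    ring
  refine Tendsto.congr' hcongr ?_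
  have : Tendsto (fun ε => ρr * (us ε - ur) * (1 + ρr * (ρs ε - ρr)⁻¹)
      - ρl * (us ε - ul) * (1 + ρl * (ρs ε - ρl)⁻¹)) l
      (𝓝 (ρr * (c - ur) * (1 + ρr * 0) - ρl * (c - ul) * (1 + ρl * 0))) := by
    exact (((husc.sub_const ur).const_mul ρr).mul
        (tendsto_const_nhds.add (hinvr.const_mul ρr))).sub
      (((husc.sub_const ul).const_mul ρl).mul
        (tendsto_const_nhds.add (hinvl.const_mul ρl)))
  convert this using 2
  rw [hc]; ring

lemma abs_integral_le_of_supported {f : ℝ → ℝ} {B T : ℝ} (hT : 0 ≤ T)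
    (hB : ∀ x, |f x| ≤ B) (h0 : ∀ x, T < |x| → f x = 0) :
    |∫ x, f x| ≤ B * (2 * T) := by
  have hfe : f = (Set.Icc (-T) T).indicator f := by
    funext x
    by_cases hx : x ∈ Set.Icc (-T) T
    · rw [Set.indicator_of_mem hx]
    · rw [Set.indicator_of_notMem hx]
      apply h0
      simp only [Set.mem_Icc, not_and_or, not_le] at hx
      rcases hx with h | h
      · exact lt_abs.mpr (Or.inr (by linarith))
      · exact lt_abs.mpr (Or.inl h)
  rw [hfe, MeasureTheory.integral_indicator measurableSet_Icc]
  have h2 := MeasureTheory.norm_setIntegral_le_of_norm_le_const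
    (μ := volume) (s := Set.Icc (-T) T) (f := f) (C := B)
    (by rw [Real.volume_Icc]; exact ENNReal.ofReal_lt_top)
    (fun x _ => by rw [Real.norm_eq_abs]; exact hB x)
  rw [Real.norm_eq_abs, measureReal_def, Real.volume_Icc] at h2
  have h3 : (ENNReal.ofReal (T - -T)).toReal = 2 * T := by
    rw [ENNReal.toReal_ofReal (by linarith)]; ring
  rw [h3] at h2
  exact h2

lemma inner_split (ρ1 ρ2 ρ3 a b : ℝ) (hab : a ≤ b) (f : ℝ → ℝ)
    (hf : MeasureTheory.Integrable f) :
    ∫ x, (if x < a then ρ1 else if x < b then ρ2 else ρ3) * f x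
      = ρ1 * (∫ x in Iio a, f x) + ρ2 * (∫ x in Ico a b, f x) + ρ3 * (∫ x in Ici b, f x) := by
  have key : (fun x => (if x < a then ρ1 else if x < b then ρ2 else ρ3) * f x)
      = (Iio a).indicator (fun y => ρ1 * f y)
        + ((Ico a b).indicator (fun y => ρ2 * f y)
        + (Ici b).indicator (fun y => ρ3 * f y)) := by
    funext x
    simp only [Pi.add_apply]
    by_cases h1 : x < a
    · have h2 : x < b := h1.trans_le hab
      simp [Set.indicator_apply, h1, h2, not_le.mpr h1, not_le.mpr h2]
    · by_cases h2 : x < b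
      · simp [Set.indicator_apply, h1, h2, not_lt.mp h1, not_le.mpr h2]
      · simp [Set.indicator_apply, h1, h2, not_lt.mp h2]
  have i1 : MeasureTheory.Integrable ((Iio a).indicator (fun y => ρ1 * f y)) :=
    (hf.const_mul ρ1).indicator measurableSet_Iio
  have i2 : MeasureTheory.Integrable ((Ico a b).indicator (fun y => ρ2 * f y)) :=
    (hf.const_mul ρ2).indicator measurableSet_Ico
  have i3 : MeasureTheory.Integrable ((Ici b).indicator (fun y => ρ3 * f y)) :=
    (hf.const_mul ρ3).indicator measurableSet_Ici
  rw [key, MeasureTheory.integral_add' i1 (i2.add i3), MeasureTheory.integral_add' i2 i3,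
    MeasureTheory.integral_indicator measurableSet_Iio,
    MeasureTheory.integral_indicator measurableSet_Ico,
    MeasureTheory.integral_indicator measurableSet_Ici]
  simp only [MeasureTheory.integral_const_mul]
  ring

lemma main_aux (ul ur ρl ρr : ℝ) (hu : ur < ul) (hρl : 0 < ρl) (hρr : 0 < ρr)
    (s1 s2 ρs : ℝ → ℝ)
    (hρpos : ∀ᶠ ε in 𝓝[>] (0:ℝ), 0 < ρs ε)
    (hs1c : Tendsto s1 (𝓝[>] (0:ℝ)) (𝓝 ((ul + ur) / 2)))
    (hs2c : Tendsto s2 (𝓝[>] (0:ℝ)) (𝓝 ((ul + ur) / 2)))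
    (hmassc : Tendsto (fun ε => ρs ε * (s2 ε - s1 ε)) (𝓝[>] (0:ℝ))
      (𝓝 ((ul - ur) * (ρl + ρr) / 2)))
    (φ : ℝ × ℝ → ℝ) (hφ : ContDiff ℝ (⊤ : ℕ∞) φ) (hcs : HasCompactSupport φ) :
    Tendsto (fun ε => ∫ t in Set.Ioi (0:ℝ), ∫ x : ℝ,
        (if x < s1 ε * t then ρl else if x < s2 ε * t then ρs ε else ρr) * φ (x, t))
      (𝓝[>] (0:ℝ))
      (𝓝 ((∫ t in Set.Ioi (0:ℝ), ∫ x in Set.Iio ((ul + ur) / 2 * t), ρl * φ (x, t)) +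
          (∫ t in Set.Ioi (0:ℝ), ∫ x in Set.Ioi ((ul + ur) / 2 * t), ρr * φ (x, t)) +
          ∫ t in Set.Ioi (0:ℝ),
            ((ul - ur) * (ρl + ρr) / 2) * t * φ ((ul + ur) / 2 * t, t))) := by
  have hφc : Continuous φ := hφ.continuous
  set c : ℝ := (ul + ur) / 2 with hc
  set M : ℝ := (ul - ur) * (ρl + ρr) / 2 with hM
  have hulur : (0:ℝ) < ul - ur := by linarith
  have hMpos : 0 < M := by
    rw [hM]; exact div_pos (mul_pos hulur (by linarith)) two_pos
  -- bound and uniform continuity of φ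
  obtain ⟨C, hC'⟩ := hcs.exists_bound_of_continuous hφc
  have hC : ∀ z, |φ z| ≤ C := fun z => by rw [← Real.norm_eq_abs]; exact hC' z
  have hC0 : (0:ℝ) ≤ C := (abs_nonneg _).trans (hC (0, 0))
  have hunif : UniformContinuous φ := hcs.uniformContinuous_of_continuous hφc
  -- time/space bound T
  obtain ⟨r, hr⟩ := hcs.isBounded.subset_closedBall 0
  set T : ℝ := max r 1 with hT
  have hT1 : (1:ℝ) ≤ T := le_max_right _ _
  have hT0 : (0:ℝ) < T := lt_of_lt_of_le one_pos hT1
  have hTs : ∀ z ∈ tsupport φ, |z.1| ≤ T ∧ |z.2| ≤ T := by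
    intro z hz
    have h1 : ‖z‖ ≤ T := le_trans (mem_closedBall_zero_iff.mp (hr hz)) (le_max_left _ _)
    rw [Prod.norm_def] at h1
    exact ⟨le_trans (le_max_left _ _) h1, le_trans (le_max_right _ _) h1⟩
  have hφt0 : ∀ x t : ℝ, T < t → φ (x, t) = 0 := by
    intro x t ht
    apply image_eq_zero_of_notMem_tsupport
    intro hmem
    have := (hTs _ hmem).2
    simp only at this
    have : t ≤ T := le_trans (le_abs_self t) this
    linarith
  have hφx0 : ∀ x t : ℝ, T < |x| → φ (x, t) = 0 := by
    intro x t hx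
    apply image_eq_zero_of_notMem_tsupport
    intro hmem
    exact absurd ((hTs _ hmem).1) (not_le.mpr hx)
  -- slice integrability
  have hslice : ∀ t : ℝ, MeasureTheory.Integrable (fun x => φ (x, t)) := by
    intro t
    apply Continuous.integrable_of_hasCompactSupport
      (hφc.comp (continuous_id.prodMk continuous_const))
    apply HasCompactSupport.intro (isCompact_Icc (a := -T) (b := T))
    intro x hx
    simp only [Set.mem_Icc, not_and_or, not_le] at hx
    have hax : T < |x| := by
      rcases hx with h | h
      · exact lt_abs.mpr (Or.inr (by linarith))
      · exact lt_abs.mpr (Or.inl h)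
    simpa using hφx0 x t hax
  -- interval integral bound helper
  have hIntBnd : ∀ (u v t : ℝ), |∫ x in u..v, φ (x, t)| ≤ C * |v - u| := by
    intro u v t
    rw [← Real.norm_eq_abs]
    apply intervalIntegral.norm_integral_le_of_norm_le_const
    intro x _
    rw [Real.norm_eq_abs]; exact hC (x, t)
  -- G side functions
  have heq1 : ∀ t : ℝ, (∫ x in Iio (c*t), ρl * φ (x, t))
      = ∫ x, (if x < c * t then ρl * φ (x, t) else 0) := by
    intro t
    rw [← MeasureTheory.integral_indicator measurableSet_Iio]
    congr 1
  have heq2 : ∀ t : ℝ, (∫ x in Ioi (c*t), ρr * φ (x, t))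
      = ∫ x, (if c * t < x then ρr * φ (x, t) else 0) := by
    intro t
    rw [← MeasureTheory.integral_indicator measurableSet_Ioi]
    congr 1
  have hg1m : StronglyMeasurable (fun t => ∫ x in Iio (c*t), ρl * φ (x, t)) := by
    have hΨ : StronglyMeasurable
        (fun q : ℝ × ℝ => if q.2 < c * q.1 then ρl * φ (q.2, q.1) else 0) := by
      apply Measurable.stronglyMeasurable
      exact Measurable.ite (measurableSet_lt measurable_snd (measurable_fst.const_mul c))
        ((hφc.comp (continuous_snd.prodMk continuous_fst)).measurable.const_mul ρl)
        measurable_const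
    rw [show (fun t => ∫ x in Iio (c*t), ρl * φ (x, t))
        = fun t => ∫ x, (if x < c * t then ρl * φ (x, t) else 0) from funext heq1]
    exact hΨ.integral_prod_right'
  have hg2m : StronglyMeasurable (fun t => ∫ x in Ioi (c*t), ρr * φ (x, t)) := by
    have hΨ : StronglyMeasurable
        (fun q : ℝ × ℝ => if c * q.1 < q.2 then ρr * φ (q.2, q.1) else 0) := by
      apply Measurable.stronglyMeasurable
      exact Measurable.ite (measurableSet_lt (measurable_fst.const_mul c) measurable_snd)
        ((hφc.comp (continuous_snd.prodMk continuous_fst)).measurable.const_mul ρr)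
        measurable_const
    rw [show (fun t => ∫ x in Ioi (c*t), ρr * φ (x, t))
        = fun t => ∫ x, (if c * t < x then ρr * φ (x, t) else 0) from funext heq2]
    exact hΨ.integral_prod_right'
  have hg1i : IntegrableOn (fun t => ∫ x in Iio (c*t), ρl * φ (x, t)) (Ioc 0 T) := by
    apply MeasureTheory.Integrable.mono' (g := fun _ => (ρl*C) * (2*T))
      (MeasureTheory.integrable_const _) hg1m.aestronglyMeasurable.restrict
    apply MeasureTheory.ae_of_all
    intro t
    rw [Real.norm_eq_abs, heq1 t]
    apply abs_integral_le_of_supported hT0.le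
    · intro x
      split_ifs
      · rw [abs_mul, abs_of_pos hρl]
        exact mul_le_mul_of_nonneg_left (hC (x, t)) hρl.le
      · simp only [abs_zero]; positivity
    · intro x hx
      split_ifs
      · rw [hφx0 x t hx, mul_zero]
      · rfl
  have hg2i : IntegrableOn (fun t => ∫ x in Ioi (c*t), ρr * φ (x, t)) (Ioc 0 T) := by
    apply MeasureTheory.Integrable.mono' (g := fun _ => (ρr*C) * (2*T))
      (MeasureTheory.integrable_const _) hg2m.aestronglyMeasurable.restrict
    apply MeasureTheory.ae_of_all
    intro t
    rw [Real.norm_eq_abs, heq2 t]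
    apply abs_integral_le_of_supported hT0.le
    · intro x
      split_ifs
      · rw [abs_mul, abs_of_pos hρr]
        exact mul_le_mul_of_nonneg_left (hC (x, t)) hρr.le
      · simp only [abs_zero]; positivity
    · intro x hx
      split_ifs
      · rw [hφx0 x t hx, mul_zero]
      · rfl
  have hg3i : IntegrableOn (fun t => M * t * φ (c*t, t)) (Ioc 0 T) := by
    apply Continuous.integrableOn_Ioc
    exact (continuous_const.mul continuous_id).mul
      (hφc.comp ((continuous_const.mul continuous_id).prodMk continuous_id))
  -- restriction to Ioc 0 T
  have hrestrict : ∀ h : ℝ → ℝ, (∀ t, T < t → h t = 0) →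
      ∫ t in Ioi (0:ℝ), h t = ∫ t in Ioc 0 T, h t := by
    intro h h0
    refine MeasureTheory.setIntegral_eq_of_subset_of_ae_diff_eq_zero
      measurableSet_Ioi.nullMeasurableSet (fun x hx => hx.1) ?_
    apply MeasureTheory.ae_of_all
    intro t ht
    apply h0
    have h1 : t ∈ Ioi (0:ℝ) := ht.1
    have h2 : t ∉ Ioc (0:ℝ) T := ht.2
    simp only [Set.mem_Ioc, not_and_or, not_le] at h2
    rcases h2 with h2 | h2
    · exact absurd h1 (by simpa using h2)
    · exact h2
  have hz1 : ∀ t, T < t → (∫ x in Iio (c*t), ρl * φ (x, t)) = 0 := by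
    intro t ht
    rw [show (fun x => ρl * φ (x, t)) = fun _ => (0:ℝ) from
      funext fun x => by rw [hφt0 x t ht, mul_zero]]
    simp
  have hz2 : ∀ t, T < t → (∫ x in Ioi (c*t), ρr * φ (x, t)) = 0 := by
    intro t ht
    rw [show (fun x => ρr * φ (x, t)) = fun _ => (0:ℝ) from
      funext fun x => by rw [hφt0 x t ht, mul_zero]]
    simp
  have hz3 : ∀ t, T < t → M * t * φ (c*t, t) = 0 := by
    intro t ht
    rw [hφt0 _ t ht, mul_zero]
  have hg12i : IntegrableOn (fun t => (∫ x in Iio (c*t), ρl * φ (x, t)) +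
      ∫ x in Ioi (c*t), ρr * φ (x, t)) (Ioc 0 T) := hg1i.add hg2i
  have hGr : (∫ t in Ioi (0:ℝ), ∫ x in Iio (c*t), ρl * φ (x, t)) +
      (∫ t in Ioi (0:ℝ), ∫ x in Ioi (c*t), ρr * φ (x, t)) +
      (∫ t in Ioi (0:ℝ), M * t * φ (c*t, t))
      = ∫ t in Ioc 0 T, ((∫ x in Iio (c*t), ρl * φ (x, t)) +
          (∫ x in Ioi (c*t), ρr * φ (x, t)) + M * t * φ (c*t, t)) := by
    rw [hrestrict _ hz1, hrestrict _ hz2, hrestrict _ hz3,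
      ← MeasureTheory.integral_add hg1i hg2i,
      ← MeasureTheory.integral_add hg12i hg3i]
  have hgi : IntegrableOn (fun t => (∫ x in Iio (c*t), ρl * φ (x, t)) +
      (∫ x in Ioi (c*t), ρr * φ (x, t)) + M * t * φ (c*t, t)) (Ioc 0 T) :=
    hg12i.add hg3i
  -- main estimate
  rw [Metric.tendsto_nhds]
  intro ε₀ hε₀
  set Q : ℝ := (T^2+1)*(C+1)*(M+1)*(ρl+ρr+1) with hQ
  have hQpos : 0 < Q := by
    rw [hQ]
    apply mul_pos (mul_pos (mul_pos (by positivity) (by positivity)) (by linarith)) (by positivity)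
  set ω : ℝ := ε₀/(8*Q) with hω
  have hωpos : 0 < ω := by rw [hω]; positivity
  obtain ⟨δω, hδωpos, hδω⟩ := Metric.uniformContinuous_iff.mp hunif ω hωpos
  set δ1 : ℝ := min (ε₀/(8*Q)) (δω/(2*T)) with hδ1
  have hδ1pos : 0 < δ1 := lt_min (by positivity) (by positivity)
  have hδ1a : δ1 ≤ ε₀/(8*Q) := min_le_left _ _
  have hδ1b : δ1 ≤ δω/(2*T) := min_le_right _ _
  set κ : ℝ := min (ε₀/(8*Q)) (min (M/2) 1) with hκ
  have hκpos : 0 < κ := lt_min (by positivity) (lt_min (by linarith) one_pos)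
  have hκa : κ ≤ ε₀/(8*Q) := min_le_left _ _
  have hκM : κ ≤ M/2 := le_trans (min_le_right _ _) (min_le_left _ _)
  have hκ1 : κ ≤ 1 := le_trans (min_le_right _ _) (min_le_right _ _)
  have e1 := Metric.tendsto_nhds.mp hs1c δ1 hδ1pos
  have e2 := Metric.tendsto_nhds.mp hs2c δ1 hδ1pos
  have e3 := Metric.tendsto_nhds.mp hmassc κ hκpos
  filter_upwards [e1, e2, e3, hρpos] with ε hd1 hd2 hdm hρsp
  rw [Real.dist_eq] at hd1 hd2 hdm
  have hmb := abs_lt.mp hdm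
  have hprod : 0 < ρs ε * (s2 ε - s1 ε) := by linarith
  have hs12 : s1 ε ≤ s2 ε := by
    by_contra hcon
    push_neg at hcon
    nlinarith [hprod]
  -- measurability and integrability of the ε-integrand
  have hΨ : StronglyMeasurable (fun q : ℝ × ℝ =>
      (if q.2 < s1 ε * q.1 then ρl else if q.2 < s2 ε * q.1 then ρs ε else ρr)
        * φ (q.2, q.1)) := by
    apply Measurable.stronglyMeasurable
    apply Measurable.mul
    · apply Measurable.ite (measurableSet_lt measurable_snd (measurable_fst.const_mul (s1 ε)))
        measurable_const
      exact Measurable.ite (measurableSet_lt measurable_snd (measurable_fst.const_mul (s2 ε)))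
        measurable_const measurable_const
    · exact (hφc.comp (continuous_snd.prodMk continuous_fst)).measurable
  have hgEm : StronglyMeasurable (fun t => ∫ x,
      (if x < s1 ε * t then ρl else if x < s2 ε * t then ρs ε else ρr) * φ (x, t)) :=
    hΨ.integral_prod_right'
  have hgEb : ∀ t, |∫ x,
      (if x < s1 ε * t then ρl else if x < s2 ε * t then ρs ε else ρr) * φ (x, t)|
        ≤ (max ρl (max (ρs ε) ρr)) * C * (2*T) := by
    intro t
    apply abs_integral_le_of_supported hT0.le
    · intro x
      rw [abs_mul]
      apply mul_le_mul ?_ (hC (x, t)) (abs_nonneg _)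
        (le_trans hρl.le (le_max_left _ _))
      split_ifs
      · rw [abs_of_pos hρl]; exact le_max_left _ _
      · rw [abs_of_pos hρsp]; exact le_trans (le_max_left _ _) (le_max_right _ _)
      · rw [abs_of_pos hρr]; exact le_trans (le_max_right _ _) (le_max_right _ _)
    · intro x hx
      rw [hφx0 x t hx, mul_zero]
  have hgEi : IntegrableOn (fun t => ∫ x,
      (if x < s1 ε * t then ρl else if x < s2 ε * t then ρs ε else ρr) * φ (x, t))
      (Ioc 0 T) := by
    apply MeasureTheory.Integrable.mono'
      (g := fun _ => (max ρl (max (ρs ε) ρr)) * C * (2*T))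
      (MeasureTheory.integrable_const _) hgEm.aestronglyMeasurable.restrict
    exact MeasureTheory.ae_of_all _ fun t => by rw [Real.norm_eq_abs]; exact hgEb t
  have hgEz : ∀ t, T < t → (∫ x,
      (if x < s1 ε * t then ρl else if x < s2 ε * t then ρs ε else ρr) * φ (x, t)) = 0 := by
    intro t ht
    rw [show (fun x => (if x < s1 ε * t then ρl else if x < s2 ε * t then ρs ε else ρr)
        * φ (x, t)) = fun _ => (0:ℝ) from funext fun x => by rw [hφt0 x t ht, mul_zero]]
    simp
  have hFr := hrestrict _ hgEz
  -- the per-t estimate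
  set β : ℝ := ρl*(C*(δ1*T)) + ρr*(C*(δ1*T)) + (ω*((M+1)*T) + κ*(T*C)) with hβ
  have hpt : ∀ t ∈ Ioc (0:ℝ) T, |(∫ x,
      (if x < s1 ε * t then ρl else if x < s2 ε * t then ρs ε else ρr) * φ (x, t))
      - ((∫ x in Iio (c*t), ρl * φ (x, t)) + (∫ x in Ioi (c*t), ρr * φ (x, t))
          + M * t * φ (c*t, t))| ≤ β := by
    intro t ht
    have ht0 : 0 < t := ht.1
    have htT : t ≤ T := ht.2
    have hab : s1 ε * t ≤ s2 ε * t := mul_le_mul_of_nonneg_right hs12 ht0.le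
    have hsplit := inner_split ρl (ρs ε) ρr (s1 ε * t) (s2 ε * t) hab
      (fun x => φ (x, t)) (hslice t)
    beta_reduce at hsplit
    rw [hsplit]
    simp only [MeasureTheory.integral_const_mul]
    -- difference of left pieces
    have hIeq1 : (∫ x in Iio (s1 ε * t), φ (x, t)) - (∫ x in Iio (c*t), φ (x, t))
        = ∫ x in (c*t)..(s1 ε * t), φ (x, t) := by
      rw [← MeasureTheory.integral_Iic_eq_integral_Iio,
        ← MeasureTheory.integral_Iic_eq_integral_Iio]
      exact intervalIntegral.integral_Iic_sub_Iic ((hslice t).integrableOn)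
        ((hslice t).integrableOn)
    have habs1 : |s1 ε * t - c * t| ≤ δ1 * T := by
      rw [show s1 ε * t - c * t = (s1 ε - c) * t by ring, abs_mul, abs_of_pos ht0]
      exact mul_le_mul hd1.le htT ht0.le hδ1pos.le
    have hb1 : |∫ x in (c*t)..(s1 ε * t), φ (x, t)| ≤ C * (δ1 * T) :=
      le_trans (hIntBnd _ _ t) (mul_le_mul_of_nonneg_left habs1 hC0)
    -- difference of right pieces
    have hIeq3 : (∫ x in Ici (s2 ε * t), φ (x, t)) - (∫ x in Ioi (c*t), φ (x, t))
        = ∫ x in (s2 ε * t)..(c*t), φ (x, t) := by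
      have hcompl1 := MeasureTheory.integral_add_compl
        (measurableSet_Iio (a := s2 ε * t)) (hslice t)
      rw [compl_Iio] at hcompl1
      have hcompl2 := MeasureTheory.integral_add_compl
        (measurableSet_Iio (a := c*t)) (hslice t)
      rw [compl_Iio] at hcompl2
      have hIci : (∫ x in Ici (c*t), φ (x, t)) = ∫ x in Ioi (c*t), φ (x, t) :=
        MeasureTheory.integral_Ici_eq_integral_Ioi
      have hint : (∫ x in Iio (c*t), φ (x, t)) - (∫ x in Iio (s2 ε * t), φ (x, t))
          = ∫ x in (s2 ε * t)..(c*t), φ (x, t) := by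
        rw [← MeasureTheory.integral_Iic_eq_integral_Iio,
          ← MeasureTheory.integral_Iic_eq_integral_Iio]
        exact intervalIntegral.integral_Iic_sub_Iic ((hslice t).integrableOn)
          ((hslice t).integrableOn)
      linarith
    have habs2 : |c * t - s2 ε * t| ≤ δ1 * T := by
      rw [show c * t - s2 ε * t = -((s2 ε - c) * t) by ring, abs_neg, abs_mul, abs_of_pos ht0]
      exact mul_le_mul hd2.le htT ht0.le hδ1pos.le
    have hb3 : |∫ x in (s2 ε * t)..(c*t), φ (x, t)| ≤ C * (δ1 * T) :=
      le_trans (hIntBnd _ _ t) (mul_le_mul_of_nonneg_left habs2 hC0)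
    -- middle piece
    have hIco : (∫ x in Ico (s1 ε * t) (s2 ε * t), φ (x, t))
        = ∫ x in (s1 ε * t)..(s2 ε * t), φ (x, t) := by
      rw [intervalIntegral.integral_of_le hab]
      exact MeasureTheory.setIntegral_congr_set MeasureTheory.Ico_ae_eq_Ioc
    have hmidsplit : (∫ x in (s1 ε * t)..(s2 ε * t), φ (x, t))
        = (∫ x in (s1 ε * t)..(s2 ε * t), (φ (x, t) - φ (c*t, t)))
          + (s2 ε * t - s1 ε * t) * φ (c*t, t) := by
      rw [intervalIntegral.integral_sub ((hslice t).intervalIntegrable)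
        (intervalIntegrable_const), intervalIntegral.integral_const, smul_eq_mul]
      ring
    have hδ1T : δ1 * T < δω := by
      have h1 : δ1 * T ≤ (δω/(2*T)) * T := mul_le_mul_of_nonneg_right hδ1b hT0.le
      have h2 : (δω/(2*T)) * T = δω/2 := by field_simp
      linarith
    have hbm1 : |∫ x in (s1 ε * t)..(s2 ε * t), (φ (x, t) - φ (c*t, t))|
        ≤ ω * (s2 ε * t - s1 ε * t) := by
      rw [← Real.norm_eq_abs]
      have := intervalIntegral.norm_integral_le_of_norm_le_const (C := ω)
        (f := fun x => φ (x, t) - φ (c*t, t)) (a := s1 ε * t) (b := s2 ε * t) ?_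
      · rw [abs_of_nonneg (by linarith : (0:ℝ) ≤ s2 ε * t - s1 ε * t)] at this
        exact this
      · intro x hx
        rw [Set.uIoc_of_le hab] at hx
        have habsx : |x - c*t| ≤ δ1 * T := by
          rw [abs_le]
          constructor
          · have := neg_abs_le (s1 ε * t - c * t)
            linarith [hx.1, habs1]
          · have := le_abs_self (s2 ε * t - c * t)
            have h3 : |s2 ε * t - c * t| ≤ δ1 * T := by
              rw [show s2 ε * t - c * t = (s2 ε - c) * t by ring, abs_mul, abs_of_pos ht0]
              exact mul_le_mul hd2.le htT ht0.le hδ1pos.le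
            linarith [hx.2]
        have hdist : dist (x, t) (c*t, t) < δω := by
          rw [Prod.dist_eq]
          have : dist t t = 0 := dist_self t
          rw [this]
          rw [Real.dist_eq]
          have : max |x - c*t| 0 = |x - c*t| := max_eq_left (abs_nonneg _)
          rw [this]
          linarith [habsx, hδ1T]
        have hh := hδω hdist
        rw [Real.dist_eq] at hh
        rw [Real.norm_eq_abs]
        exact hh.le
    have hmid : |ρs ε * (∫ x in Ico (s1 ε * t) (s2 ε * t), φ (x, t)) - M * t * φ (c*t, t)|
        ≤ ω*((M+1)*T) + κ*(T*C) := by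
      rw [hIco, hmidsplit]
      have hexp : ρs ε * ((∫ x in (s1 ε * t)..(s2 ε * t), (φ (x, t) - φ (c*t, t)))
          + (s2 ε * t - s1 ε * t) * φ (c*t, t)) - M * t * φ (c*t, t)
          = ρs ε * (∫ x in (s1 ε * t)..(s2 ε * t), (φ (x, t) - φ (c*t, t)))
            + (ρs ε * (s2 ε - s1 ε) - M) * (t * φ (c*t, t)) := by ring
      rw [hexp]
      have hA : |ρs ε * (∫ x in (s1 ε * t)..(s2 ε * t), (φ (x, t) - φ (c*t, t)))|
          ≤ ω*((M+1)*T) := by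
        rw [abs_mul, abs_of_pos hρsp]
        have h1 : ρs ε * |∫ x in (s1 ε * t)..(s2 ε * t), (φ (x, t) - φ (c*t, t))|
            ≤ ρs ε * (ω * (s2 ε * t - s1 ε * t)) := mul_le_mul_of_nonneg_left hbm1 hρsp.le
        have h2 : ρs ε * (ω * (s2 ε * t - s1 ε * t)) = ω * (ρs ε * (s2 ε - s1 ε) * t) := by
          ring
        have h3 : ρs ε * (s2 ε - s1 ε) * t ≤ (M+1)*T := by
          have hu : ρs ε * (s2 ε - s1 ε) ≤ M + 1 := by linarith
          have := mul_le_mul hu htT ht0.le (by linarith : (0:ℝ) ≤ M + 1)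
          linarith
        have h4 : ω * (ρs ε * (s2 ε - s1 ε) * t) ≤ ω * ((M+1)*T) :=
          mul_le_mul_of_nonneg_left h3 hωpos.le
        linarith
      have hB : |(ρs ε * (s2 ε - s1 ε) - M) * (t * φ (c*t, t))| ≤ κ*(T*C) := by
        rw [abs_mul, abs_mul, abs_of_pos ht0]
        exact mul_le_mul hdm.le
          (mul_le_mul htT (hC _) (abs_nonneg _) hT0.le)
          (by positivity) hκpos.le
      calc _ ≤ |ρs ε * (∫ x in (s1 ε * t)..(s2 ε * t), (φ (x, t) - φ (c*t, t)))|
            + |(ρs ε * (s2 ε - s1 ε) - M) * (t * φ (c*t, t))| := abs_add_le _ _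
        _ ≤ ω*((M+1)*T) + κ*(T*C) := add_le_add hA hB
    -- assemble
    have hdecomp : ρl * (∫ x in Iio (s1 ε * t), φ (x, t))
        + ρs ε * (∫ x in Ico (s1 ε * t) (s2 ε * t), φ (x, t))
        + ρr * (∫ x in Ici (s2 ε * t), φ (x, t))
        - (ρl * (∫ x in Iio (c*t), φ (x, t)) + ρr * (∫ x in Ioi (c*t), φ (x, t))
            + M * t * φ (c*t, t))
        = ρl * ((∫ x in Iio (s1 ε * t), φ (x, t)) - (∫ x in Iio (c*t), φ (x, t)))
          + ρr * ((∫ x in Ici (s2 ε * t), φ (x, t)) - (∫ x in Ioi (c*t), φ (x, t)))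
          + (ρs ε * (∫ x in Ico (s1 ε * t) (s2 ε * t), φ (x, t)) - M * t * φ (c*t, t)) := by
      ring
    rw [hdecomp, hIeq1, hIeq3]
    have h1 : |ρl * ∫ x in (c*t)..(s1 ε * t), φ (x, t)| ≤ ρl*(C*(δ1*T)) := by
      rw [abs_mul, abs_of_pos hρl]
      exact mul_le_mul_of_nonneg_left hb1 hρl.le
    have h2 : |ρr * ∫ x in (s2 ε * t)..(c*t), φ (x, t)| ≤ ρr*(C*(δ1*T)) := by
      rw [abs_mul, abs_of_pos hρr]
      exact mul_le_mul_of_nonneg_left hb3 hρr.le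
    calc _ ≤ |ρl * ∫ x in (c*t)..(s1 ε * t), φ (x, t)|
          + |ρr * ∫ x in (s2 ε * t)..(c*t), φ (x, t)|
          + |ρs ε * (∫ x in Ico (s1 ε * t) (s2 ε * t), φ (x, t)) - M * t * φ (c*t, t)| :=
        abs_add_three _ _ _
      _ ≤ β := by rw [hβ]; linarith [hmid]
  -- conclude
  rw [Real.dist_eq, hFr, hGr, ← MeasureTheory.integral_sub hgEi hgi]
  have hle : |∫ t in Ioc (0:ℝ) T, ((∫ x,
      (if x < s1 ε * t then ρl else if x < s2 ε * t then ρs ε else ρr) * φ (x, t))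
      - ((∫ x in Iio (c*t), ρl * φ (x, t)) + (∫ x in Ioi (c*t), ρr * φ (x, t))
          + M * t * φ (c*t, t)))| ≤ β * T := by
    rw [← Real.norm_eq_abs]
    have hvol : (volume (Ioc (0:ℝ) T)).toReal = T := by
      rw [Real.volume_Ioc, ENNReal.toReal_ofReal (by linarith)]
      ring
    have := MeasureTheory.norm_setIntegral_le_of_norm_le_const (C := β)
      (μ := volume) (s := Set.Ioc (0:ℝ) T)
      (f := fun t => (∫ x,
        (if x < s1 ε * t then ρl else if x < s2 ε * t then ρs ε else ρr) * φ (x, t))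
        - ((∫ x in Iio (c*t), ρl * φ (x, t)) + (∫ x in Ioi (c*t), ρr * φ (x, t))
            + M * t * φ (c*t, t)))
      (by rw [Real.volume_Ioc]; exact ENNReal.ofReal_lt_top)
      (fun t ht => by rw [Real.norm_eq_abs]; exact hpt t ht)
    rw [measureReal_def, hvol] at this
    exact this
  refine lt_of_le_of_lt hle ?_
  -- numeric bound: β * T < ε₀
  have hQ8 : (0:ℝ) < 8*Q := by positivity
  have k1 : ρl*C*(T*T) ≤ Q := by
    have a1 : T*T ≤ (M+1)*(T^2+1) := by nlinarith [sq_nonneg T]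
    have a2 : C*(T*T) ≤ (C+1)*((M+1)*(T^2+1)) :=
      mul_le_mul (by linarith) a1 (by positivity) (by linarith)
    have a3 : ρl*(C*(T*T)) ≤ (ρl+ρr+1)*((C+1)*((M+1)*(T^2+1))) :=
      mul_le_mul (by linarith) a2 (by positivity) (by linarith)
    calc ρl*C*(T*T) = ρl*(C*(T*T)) := by ring
      _ ≤ (ρl+ρr+1)*((C+1)*((M+1)*(T^2+1))) := a3
      _ = Q := by rw [hQ]; ring
  have k2 : ρr*C*(T*T) ≤ Q := by
    have a1 : T*T ≤ (M+1)*(T^2+1) := by nlinarith [sq_nonneg T]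
    have a2 : C*(T*T) ≤ (C+1)*((M+1)*(T^2+1)) :=
      mul_le_mul (by linarith) a1 (by positivity) (by linarith)
    have a3 : ρr*(C*(T*T)) ≤ (ρl+ρr+1)*((C+1)*((M+1)*(T^2+1))) :=
      mul_le_mul (by linarith) a2 (by positivity) (by linarith)
    calc ρr*C*(T*T) = ρr*(C*(T*T)) := by ring
      _ ≤ (ρl+ρr+1)*((C+1)*((M+1)*(T^2+1))) := a3
      _ = Q := by rw [hQ]; ring
  have k3 : (M+1)*(T*T) ≤ Q := by
    have a1 : (M+1)*(T*T) ≤ (M+1)*(T^2+1) := by nlinarith [sq_nonneg T]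
    have a2 : (1:ℝ) ≤ (C+1)*(ρl+ρr+1) := by nlinarith
    have a3 : (M+1)*(T^2+1) ≤ ((C+1)*(ρl+ρr+1))*((M+1)*(T^2+1)) :=
      le_mul_of_one_le_left (by nlinarith [sq_nonneg T]) a2
    calc (M+1)*(T*T) ≤ (M+1)*(T^2+1) := a1
      _ ≤ ((C+1)*(ρl+ρr+1))*((M+1)*(T^2+1)) := a3
      _ = Q := by rw [hQ]; ring
  have k4 : C*(T*T) ≤ Q := by
    have a1 : C*(T*T) ≤ (C+1)*(T^2+1) := by nlinarith [sq_nonneg T]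
    have a2 : (1:ℝ) ≤ (M+1)*(ρl+ρr+1) := by nlinarith
    have a3 : (C+1)*(T^2+1) ≤ ((M+1)*(ρl+ρr+1))*((C+1)*(T^2+1)) :=
      le_mul_of_one_le_left (by nlinarith [sq_nonneg T]) a2
    calc C*(T*T) ≤ (C+1)*(T^2+1) := a1
      _ ≤ ((M+1)*(ρl+ρr+1))*((C+1)*(T^2+1)) := a3
      _ = Q := by rw [hQ]; ring
  have hE : Q*(ε₀/(8*Q)) = ε₀/8 := by field_simp
  have t1 : ρl*(C*(δ1*T))*T ≤ ε₀/8 := by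
    calc ρl*(C*(δ1*T))*T = (ρl*C*(T*T))*δ1 := by ring
      _ ≤ Q*(ε₀/(8*Q)) := mul_le_mul k1 hδ1a hδ1pos.le hQpos.le
      _ = ε₀/8 := hE
  have t2 : ρr*(C*(δ1*T))*T ≤ ε₀/8 := by
    calc ρr*(C*(δ1*T))*T = (ρr*C*(T*T))*δ1 := by ring
      _ ≤ Q*(ε₀/(8*Q)) := mul_le_mul k2 hδ1a hδ1pos.le hQpos.le
      _ = ε₀/8 := hE
  have t3 : ω*((M+1)*T)*T ≤ ε₀/8 := by
    calc ω*((M+1)*T)*T = ((M+1)*(T*T))*ω := by ring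
      _ ≤ Q*(ε₀/(8*Q)) := mul_le_mul k3 (le_of_eq hω) hωpos.le hQpos.le
      _ = ε₀/8 := hE
  have t4 : κ*(T*C)*T ≤ ε₀/8 := by
    calc κ*(T*C)*T = (C*(T*T))*κ := by ring
      _ ≤ Q*(ε₀/(8*Q)) := mul_le_mul k4 hκa hκpos.le hQpos.le
      _ = ε₀/8 := hE
  have : β*T = ρl*(C*(δ1*T))*T + ρr*(C*(δ1*T))*T + (ω*((M+1)*T)*T + κ*(T*C)*T) := by
    rw [hβ]; ring
  rw [this]
  linarith

/-- Delta-shock limit of the density: as `ε → 0⁺`, the density `ρ^ε` of the two-shock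
Riemann solution converges in the sense of distributions to
`ρ_l χ_{x < ct} + ρ_r χ_{x > ct} + ((u_l−u_r)(ρ_l+ρ_r)/2)·t·δ_{x = ct}`, `c = (u_l+u_r)/2`. -/
theorem stmt10 (ul ur ρl ρr η : ℝ) (hu : ur < ul) (hρl : 0 < ρl) (hρr : 0 < ρr)
    (hη : 0 < η) (us ρs s1 s2 : ℝ → ℝ)
    (hmem : ∀ ε ∈ Set.Ioo (0:ℝ) η, ur < us ε ∧ us ε < ul ∧ max ρl ρr < ρs ε)
    (heq1 : ∀ ε ∈ Set.Ioo (0:ℝ) η,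
      (us ε - ul) ^ 2 * (ρs ε + ρl) / 2 = ε * (ρs ε - ρl) * (p (ρs ε) - p ρl))
    (heq2 : ∀ ε ∈ Set.Ioo (0:ℝ) η,
      (us ε - ur) ^ 2 * (ρs ε + ρr) / 2 = ε * (ρs ε - ρr) * (p (ρs ε) - p ρr))
    (hs1 : ∀ ε, s1 ε = (us ε + ul) / 2 + ε * (p (ρs ε) - p ρl) / (us ε - ul))
    (hs2 : ∀ ε, s2 ε = (us ε + ur) / 2 + ε * (p (ρs ε) - p ρr) / (us ε - ur))
    (φ : ℝ × ℝ → ℝ) (hφ : ContDiff ℝ (⊤ : ℕ∞) φ) (hcs : HasCompactSupport φ)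
    (hsupp : tsupport φ ⊆ Set.univ ×ˢ Set.Ioi 0) :
    Tendsto (fun ε => ∫ t in Set.Ioi (0:ℝ), ∫ x : ℝ,
        (if x < s1 ε * t then ρl else if x < s2 ε * t then ρs ε else ρr) * φ (x, t))
      (𝓝[>] (0:ℝ))
      (𝓝 ((∫ t in Set.Ioi (0:ℝ), ∫ x in Set.Iio ((ul + ur) / 2 * t), ρl * φ (x, t)) +
          (∫ t in Set.Ioi (0:ℝ), ∫ x in Set.Ioi ((ul + ur) / 2 * t), ρr * φ (x, t)) +
          ∫ t in Set.Ioi (0:ℝ),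
            ((ul - ur) * (ρl + ρr) / 2) * t * φ ((ul + ur) / 2 * t, t))) := by
  have htop : Tendsto ρs (𝓝[>] (0:ℝ)) atTop :=
    rhos_atTop ul ur ρl ρr η hu hρl hρr hη us ρs hmem heq1 heq2
  obtain ⟨husc, hs1c, hs2c, hmassc⟩ :=
    limits_aux ul ur ρl ρr η hu hρl hρr hη us ρs s1 s2 hmem heq1 heq2 hs1 hs2 htop
  have hρpos : ∀ᶠ ε in 𝓝[>] (0:ℝ), 0 < ρs ε := by
    filter_upwards [Ioo_mem_nhdsGT_of_mem (by exact ⟨le_rfl, hη⟩ : (0:ℝ) ∈ Set.Ico 0 η)]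
      with ε hε
    exact hρl.trans ((le_max_left ρl ρr).trans_lt (hmem ε hε).2.2)
  exact main_aux ul ur ρl ρr hu hρl hρr s1 s2 ρs hρpos hs1c hs2c hmassc φ hφ hcs
end
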